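/- In the formal Weyl algebra over a symplectic vector space, the center of the Moyal product algebra consists exactly of the elements independent of the variables yⁱ, i.e. the scalars ℝ[[ℏ]]. -/

import Mathlib

/-!
The formal Weyl algebra `ℝ[[y¹,…,y^m, ℏ]]` is represented concretely by its
coefficients: an element is a function `(Fin m →₀ ℕ) → ℕ → ℝ`, sending a monomial
`y^d` and a power `l` to the coefficient of `y^d ℏ^l`.  Partial derivatives, the
commutative product, and the Moyal star product
`a ∘ b = Σ_q (1/q!) (−ℏ/2)^q ω^{i₁j₁}⋯ω^{i_q j_q} ∂^q a/∂y^{i⃗} ∂^q b/∂y^{j⃗}`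
are defined coefficientwise (the `q`-sum is finite in each `ℏ`-coefficient).
-/

open scoped BigOperators

noncomputable section

/-- Coefficients of a formal power series in `y¹,…,y^m` and `ℏ`. -/
def Weyl (m : ℕ) : Type := (Fin m →₀ ℕ) → ℕ → ℝ

variable {m : ℕ}

/-- Partial derivative `∂/∂yⁱ`. -/
def wDeriv (i : Fin m) (a : Weyl m) : Weyl m :=
  fun d l => ((d i : ℝ) + 1) * a (d + Finsupp.single i 1) l

/-- Iterated partial derivatives `∂^q/∂y^{i₁}⋯∂y^{i_q}`. -/
def wDerivs : ∀ q : ℕ, (Fin q → Fin m) → Weyl m → Weyl m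
  | 0, _, a => a
  | q + 1, f, a => wDeriv (f 0) (wDerivs q (fun t => f t.succ) a)

/-- The (commutative) product of formal power series. -/
def wMul (a b : Weyl m) : Weyl m :=
  fun d l => ∑ p ∈ Finset.HasAntidiagonal.antidiagonal d, ∑ s ∈ Finset.HasAntidiagonal.antidiagonal l,
    a p.1 s.1 * b p.2 s.2

/-- The `q`-th bidifferential term
`ω^{i₁j₁}⋯ω^{i_qj_q} (∂^q a/∂y^{i⃗})(∂^q b/∂y^{j⃗})`. -/
def moyalTerm (Ω : Matrix (Fin m) (Fin m) ℝ) (q : ℕ) (a b : Weyl m) : Weyl m :=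
  fun d l => ∑ I : Fin q → Fin m, ∑ J : Fin q → Fin m,
    (∏ t : Fin q, Ω (I t) (J t)) * wMul (wDerivs q I a) (wDerivs q J b) d l

/-- The Moyal star product, coefficientwise in `ℏ`:
`a ∘ b = Σ_q (1/q!)(−ℏ/2)^q (q-th term)`. -/
def moyal (Ω : Matrix (Fin m) (Fin m) ℝ) (a b : Weyl m) : Weyl m :=
  fun d l => ∑ q ∈ Finset.range (l + 1),
    (((-1 : ℝ) / 2) ^ q / (Nat.factorial q : ℝ)) * moyalTerm Ω q a b d (l - q)


/-!
Every Moyal term of order `q ≥ 1` differentiates both factors, so an element of `ℝ[[ℏ]]`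
commutes with everything. Conversely, test a central `a` against the coordinate functions `yʲ`:
their second derivatives vanish, so only the first-order term survives, and since `Ω = ω⁻¹` is
antisymmetric the commutator is `a ∘ yʲ - yʲ ∘ a = -ℏ ∑ᵢ Ωⁱʲ ∂ᵢa`. Invertibility of `Ω` then
gives `∂ᵢa = 0` for all `i`, i.e. `a ∈ ℝ[[ℏ]]`.
-/

open Matrix

lemma Matrix.transpose_eq_neg_of_mul_eq_one {n R : Type*} [Fintype n] [DecidableEq n] [CommRing R]
    {A B : Matrix n n R} (hA : Aᵀ = -A) (h : B * A = 1) : Bᵀ = -B := by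
  have hABt : A * Bᵀ = -1 := by
    rw [← neg_neg A, neg_mul, ← hA, ← transpose_mul, h, transpose_one]
  calc Bᵀ = B * A * Bᵀ := by rw [h, one_mul]
    _ = -B := by rw [mul_assoc, hABt, mul_neg, mul_one]

namespace Weyl

instance : Zero (Weyl m) := ⟨fun _ _ => 0⟩

@[simp] lemma zero_apply (d : Fin m →₀ ℕ) (l : ℕ) : (0 : Weyl m) d l = 0 := rfl

end Weyl

def wOne : Weyl m := fun d l => if d = 0 ∧ l = 0 then 1 else 0

def wY (j : Fin m) : Weyl m := fun d l => if d = Finsupp.single j 1 ∧ l = 0 then 1 else 0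

/-- Elements of `ℝ[[ℏ]] ⊆ ℝ[[y, ℏ]]`. -/
def IsScalar (a : Weyl m) : Prop := ∀ d l, d ≠ 0 → a d l = 0

lemma isScalar_zero : IsScalar (0 : Weyl m) := fun _ _ _ => rfl

lemma isScalar_wOne : IsScalar (wOne : Weyl m) := by
  intro d l hd
  simp [wOne, hd]

section Product

lemma Finset.HasAntidiagonal.snd_ne_zero_of_ne {A : Type*} [AddMonoid A] [Finset.HasAntidiagonal A]
    {n : A} {p : A × A} (hp : p ∈ Finset.HasAntidiagonal.antidiagonal n) (hne : p ≠ (n, 0)) :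
    p.2 ≠ 0 := by
  intro h
  rw [Finset.HasAntidiagonal.mem_antidiagonal, h, add_zero] at hp
  exact hne (Prod.ext hp h)

lemma wMul_comm (a b : Weyl m) : wMul a b = wMul b a := by
  funext d l
  simp only [wMul]
  conv_lhs => rw [← Finset.HasAntidiagonal.map_swap_antidiagonal (n := d), Finset.sum_map]
  refine Finset.sum_congr rfl fun p _ => ?_
  conv_lhs => rw [← Finset.HasAntidiagonal.map_swap_antidiagonal (n := l), Finset.sum_map]
  simp [mul_comm]

@[simp] lemma wMul_zero (a : Weyl m) : wMul a 0 = 0 := by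
  funext d l
  simp [wMul]

@[simp] lemma zero_wMul (a : Weyl m) : wMul 0 a = 0 := by
  rw [wMul_comm, wMul_zero]

@[simp] lemma wMul_wOne (a : Weyl m) : wMul a wOne = a := by
  funext d l
  simp only [wMul, wOne, ite_and, mul_ite, mul_one, mul_zero, Finset.sum_ite_irrel,
    Finset.sum_const_zero]
  rw [Finset.sum_eq_single_of_mem (d, 0) (by simp)
      (fun p hp hne => if_neg (Finset.HasAntidiagonal.snd_ne_zero_of_ne hp hne)), if_pos rfl,
    Finset.sum_eq_single_of_mem (l, 0) (by simp)
      (fun s hs hne => if_neg (Finset.HasAntidiagonal.snd_ne_zero_of_ne hs hne)), if_pos rfl]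

@[simp] lemma wOne_wMul (a : Weyl m) : wMul wOne a = a := by
  rw [wMul_comm, wMul_wOne]

end Product

section Derivatives

lemma add_single_ne_zero (d : Fin m →₀ ℕ) (i : Fin m) : d + Finsupp.single i 1 ≠ 0 := by
  intro h
  simpa using DFunLike.congr_fun h i

lemma add_single_eq_single_iff (d : Fin m →₀ ℕ) (i j : Fin m) :
    d + Finsupp.single i 1 = Finsupp.single j 1 ↔ i = j ∧ d = 0 := by
  constructor
  · intro h
    by_cases hij : i = j
    · subst hij
      exact ⟨rfl, by simpa using h⟩
    · simpa [Finsupp.single_apply, hij] using DFunLike.congr_fun h i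
  · rintro ⟨rfl, rfl⟩
    simp

lemma IsScalar.wDeriv_eq_zero {a : Weyl m} (ha : IsScalar a) (i : Fin m) : wDeriv i a = 0 := by
  funext d l
  simp [wDeriv, ha _ l (add_single_ne_zero d i)]

lemma IsScalar.wDeriv {a : Weyl m} (ha : IsScalar a) (i : Fin m) : IsScalar (wDeriv i a) := by
  rw [ha.wDeriv_eq_zero]
  exact isScalar_zero

lemma isScalar_of_forall_wDeriv_eq_zero {a : Weyl m} (ha : ∀ i, wDeriv i a = 0) :
    IsScalar a := by
  intro d l hd
  obtain ⟨i, hi⟩ := Finsupp.ne_iff.mp hd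
  have hle : Finsupp.single i 1 ≤ d := by simpa [Nat.one_le_iff_ne_zero] using hi
  obtain ⟨d', rfl⟩ : ∃ d', d = d' + Finsupp.single i 1 :=
    ⟨d - Finsupp.single i 1, (tsub_add_cancel_of_le hle).symm⟩
  have h := congrFun (congrFun (ha i) d') l
  simp only [wDeriv, Weyl.zero_apply, mul_eq_zero] at h
  exact h.resolve_left (by positivity)

lemma wDerivs_succ_eq_zero_of_isScalar {a : Weyl m} (ha : IsScalar a) :
    ∀ (q : ℕ) (I : Fin (q + 1) → Fin m), wDerivs (q + 1) I a = 0
  | 0, I => ha.wDeriv_eq_zero (I 0)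
  | q + 1, I => by
    rw [wDerivs, wDerivs_succ_eq_zero_of_isScalar ha q]
    exact isScalar_zero.wDeriv_eq_zero (I 0)

lemma isScalar_wDerivs_succ {b : Weyl m} (hb : ∀ i, IsScalar (wDeriv i b)) :
    ∀ (q : ℕ) (I : Fin (q + 1) → Fin m), IsScalar (wDerivs (q + 1) I b)
  | 0, I => hb (I 0)
  | q + 1, I => (isScalar_wDerivs_succ hb q _).wDeriv (I 0)

@[simp] lemma wDeriv_wY_self (j : Fin m) : wDeriv j (wY j) = wOne := by
  funext d l
  simp only [wDeriv, wY, wOne, add_single_eq_single_iff, true_and]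
  split_ifs with h <;> simp_all

lemma wDeriv_wY_of_ne {i j : Fin m} (h : i ≠ j) : wDeriv i (wY j) = 0 := by
  funext d l
  simp [wDeriv, wY, add_single_eq_single_iff, h]

lemma isScalar_wDeriv_wY (i j : Fin m) : IsScalar (wDeriv i (wY j)) := by
  rcases eq_or_ne i j with rfl | h
  · simpa using isScalar_wOne
  · simpa [wDeriv_wY_of_ne h] using isScalar_zero

lemma wDerivs_wY_eq_zero (j : Fin m) (q : ℕ) (I : Fin (q + 2) → Fin m) :
    wDerivs (q + 2) I (wY j) = 0 :=
  ((isScalar_wDerivs_succ (isScalar_wDeriv_wY · j) q _).wDeriv_eq_zero (I 0))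

end Derivatives

section MoyalProduct

variable (Ω : Matrix (Fin m) (Fin m) ℝ)

lemma moyalTerm_zero (a b : Weyl m) : moyalTerm Ω 0 a b = wMul a b := by
  funext d l
  simp [moyalTerm, wDerivs]

lemma moyalTerm_eq_zero_of_wDerivs_left {q : ℕ} {a : Weyl m} (ha : ∀ I, wDerivs q I a = 0)
    (b : Weyl m) : moyalTerm Ω q a b = 0 := by
  funext d l
  simp [moyalTerm, ha]

lemma moyalTerm_eq_zero_of_wDerivs_right {q : ℕ} (a : Weyl m) {b : Weyl m}
    (hb : ∀ J, wDerivs q J b = 0) : moyalTerm Ω q a b = 0 := by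
  funext d l
  simp [moyalTerm, hb]

lemma moyalTerm_one_apply (a b : Weyl m) (d : Fin m →₀ ℕ) (l : ℕ) :
    moyalTerm Ω 1 a b d l = ∑ i, ∑ j, Ω i j * wMul (wDeriv i a) (wDeriv j b) d l := by
  simp only [moyalTerm, ← (Equiv.funUnique (Fin 1) (Fin m)).symm.sum_comp]
  simp [wDerivs]

lemma moyalTerm_one_wY_apply (a : Weyl m) (j : Fin m) (d : Fin m →₀ ℕ) (l : ℕ) :
    moyalTerm Ω 1 a (wY j) d l = ∑ i, Ω i j * wDeriv i a d l := by
  rw [moyalTerm_one_apply]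
  refine Finset.sum_congr rfl fun i _ => ?_
  rw [Finset.sum_eq_single j (fun k _ hk => by simp [wDeriv_wY_of_ne hk]) (by simp)]
  simp

lemma moyalTerm_one_wY_left_apply (a : Weyl m) (j : Fin m) (d : Fin m →₀ ℕ) (l : ℕ) :
    moyalTerm Ω 1 (wY j) a d l = ∑ i, Ω j i * wDeriv i a d l := by
  rw [moyalTerm_one_apply, Finset.sum_eq_single j
    (fun k _ hk => Finset.sum_eq_zero fun i _ => by simp [wDeriv_wY_of_ne hk]) (by simp)]
  simp

lemma moyal_comm_of_isScalar {a : Weyl m} (ha : IsScalar a) (b : Weyl m) :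
    moyal Ω a b = moyal Ω b a := by
  funext d l
  refine Finset.sum_congr rfl fun q _ => congrArg _ ?_
  cases q with
  | zero => rw [moyalTerm_zero, moyalTerm_zero, wMul_comm]
  | succ q =>
    rw [moyalTerm_eq_zero_of_wDerivs_left Ω (wDerivs_succ_eq_zero_of_isScalar ha q),
      moyalTerm_eq_zero_of_wDerivs_right Ω b (wDerivs_succ_eq_zero_of_isScalar ha q)]

lemma moyal_wY_sub_wY_moyal_apply (hΩ : Ωᵀ = -Ω) (a : Weyl m) (j : Fin m)
    (d : Fin m →₀ ℕ) (l : ℕ) :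
    moyal Ω a (wY j) d (l + 1) - moyal Ω (wY j) a d (l + 1)
      = -vecMul (fun i => wDeriv i a d l) Ω j := by
  simp only [moyal, ← Finset.sum_sub_distrib, ← mul_sub]
  rw [Finset.sum_eq_single 1]
  · have hΩji : ∀ i, Ω j i = -Ω i j := fun i => by simpa using congrFun (congrFun hΩ i) j
    rw [Nat.add_sub_cancel, moyalTerm_one_wY_apply, moyalTerm_one_wY_left_apply]
    simp only [hΩji, neg_mul, Finset.sum_neg_distrib, vecMul, dotProduct, mul_comm (Ω _ j)]
    norm_num
    ring
  · rintro (_ | _ | q) _ hq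
    · simp [moyalTerm_zero, wMul_comm]
    · exact absurd rfl hq
    · rw [moyalTerm_eq_zero_of_wDerivs_left Ω (wDerivs_wY_eq_zero j q),
        moyalTerm_eq_zero_of_wDerivs_right Ω a (wDerivs_wY_eq_zero j q), sub_self, mul_zero]
  · simp

end MoyalProduct

theorem moyal_center_general (ω Ω : Matrix (Fin m) (Fin m) ℝ)
    (halt : ∀ i j, ω j i = - ω i j)
    (hinv₂ : Ω * ω = 1) (a : Weyl m) :
    (∀ b : Weyl m, moyal Ω a b = moyal Ω b a)
      ↔ (∀ (d : Fin m →₀ ℕ) (l : ℕ), d ≠ 0 → a d l = 0) := by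
  refine ⟨fun h => ?_, moyal_comm_of_isScalar Ω⟩
  have hΩ : Ωᵀ = -Ω := transpose_eq_neg_of_mul_eq_one (Matrix.ext halt) hinv₂
  refine isScalar_of_forall_wDeriv_eq_zero fun i => funext fun d => funext fun l => ?_
  have hgrad : vecMul (fun i => wDeriv i a d l) Ω = 0 := funext fun j => by
    simpa [h] using (moyal_wY_sub_wY_moyal_apply Ω hΩ a j d l).symm
  simpa [hinv₂] using congrFun (congrArg (vecMul · ω) hgrad) i

/-- **The center of the formal Weyl algebra**: an element commutes with every
element of the Moyal algebra iff it is independent of the variables `yⁱ`,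
i.e. lies in `ℝ[[ℏ]]`.  Here `Ω = (ω^{ij})` is the inverse of a nondegenerate
antisymmetric matrix `ω`. -/
theorem moyal_center (ω Ω : Matrix (Fin m) (Fin m) ℝ)
    (halt : ∀ i j, ω j i = - ω i j)
    (hinv₁ : ω * Ω = 1) (hinv₂ : Ω * ω = 1) (a : Weyl m) :
    (∀ b : Weyl m, moyal Ω a b = moyal Ω b a)
      ↔ (∀ (d : Fin m →₀ ℕ) (l : ℕ), d ≠ 0 → a d l = 0) :=
  moyal_center_general ω Ω halt hinv₂ a

end
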